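/- arXiv:1508.06911 — 2 statements merged into one kernel-verified Lean document; each statement's English description precedes it below -/
import Mathlib

section
/- Let W : [0,∞) → [0,∞) be the inverse of x ↦ x·exp(x) (the Lambert W function restricted to nonnegative reals). For parameters τ > 0, α > 0, and neighbor effort y ≥ 0, the unique maximizer y_i ≥ 0 of the utility U(y_i) = 1 - exp(-τ(y_i + y)) - y_i^{α+1}/(α+1) over y_i ≥ 0 is y_i = (α/τ) · W((τ^{(α+1)/α}/α) · exp(-τ·y/α)). -/
/-!
The utility is strictly concave on `[0, ∞)`, its derivative `τ exp (-τ (t + y)) - t ^ α` being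
strictly decreasing; so it has at most one maximizer there, and any zero of the derivative is one.
For `t = (α / τ) w`, taking logarithms turns the first-order condition `τ exp (-τ (t + y)) = t ^ α`
into `w exp w = τ ^ ((α + 1) / α) / α * exp (-τ y / α)`, which `w = W (…)` satisfies.
-/

/-- The Lambert W function on `[0,∞)`: the inverse of `x ↦ x * exp x` on `[0,∞)`. -/
noncomputable def lambertW (x : ℝ) : ℝ :=
  Function.invFunOn (fun t => t * Real.exp t) (Set.Ici 0) x

open Real Set

theorem exists_mul_exp_eq {c : ℝ} (hc : 0 ≤ c) : ∃ w ∈ Ici (0 : ℝ), w * exp w = c := by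
  have hmem : c ∈ Icc (0 * exp 0) (c * exp c) :=
    ⟨by simpa using hc, le_mul_of_one_le_right hc (one_le_exp hc)⟩
  obtain ⟨w, hw, hwc⟩ :=
    intermediate_value_Icc hc (continuous_id.mul continuous_exp).continuousOn hmem
  exact ⟨w, hw.1, hwc⟩

theorem lambertW_nonneg {c : ℝ} (hc : 0 ≤ c) : 0 ≤ lambertW c :=
  Function.invFunOn_mem (exists_mul_exp_eq hc)

theorem lambertW_mul_exp_lambertW {c : ℝ} (hc : 0 ≤ c) : lambertW c * exp (lambertW c) = c :=
  Function.invFunOn_eq (exists_mul_exp_eq hc)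

theorem ConcaveOn.isMaxOn_of_hasDerivAt_eq_zero {f : ℝ → ℝ} {s : Set ℝ} {x : ℝ}
    (hf : ConcaveOn ℝ s f) (hx : x ∈ s) (hfx : HasDerivAt f 0 x) : IsMaxOn f s x := by
  rw [isMaxOn_iff]
  intro z hz
  rcases lt_trichotomy z x with hzx | rfl | hxz
  · exact (slope_nonneg_iff_of_le (f := f) hzx.le).1 (hf.le_slope_of_hasDerivAt hz hx hzx hfx)
  · exact le_rfl
  · exact (slope_nonpos_iff_of_le (f := f) hxz.le).1 (hf.slope_le_of_hasDerivAt hx hz hxz hfx)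

noncomputable def utility (τ α y t : ℝ) : ℝ := 1 - exp (-τ * (t + y)) - t ^ (α + 1) / (α + 1)

noncomputable def marginalUtility (τ α y t : ℝ) : ℝ := τ * exp (-τ * (t + y)) - t ^ α

section Utility

variable {τ α y : ℝ}

theorem hasDerivAt_utility (hα : 0 ≤ α) (t : ℝ) :
    HasDerivAt (utility τ α y) (marginalUtility τ α y t) t := by
  have hexp : HasDerivAt (fun t => exp (-τ * (t + y))) (exp (-τ * (t + y)) * -τ) t := by
    simpa using (((hasDerivAt_id t).add_const y).const_mul (-τ)).exp
  have hpow : HasDerivAt (fun t => t ^ (α + 1) / (α + 1)) (t ^ α) t := by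
    have h := (hasDerivAt_rpow_const (x := t) (p := α + 1) (Or.inr (by linarith))).div_const
      (α + 1)
    rwa [add_sub_cancel_right, mul_div_cancel_left₀ _ (by linarith)] at h
  exact ((hexp.const_sub 1).fun_sub hpow).congr_deriv (by rw [marginalUtility]; ring)

theorem strictAntiOn_marginalUtility (hτ : 0 ≤ τ) (hα : 0 < α) :
    StrictAntiOn (marginalUtility τ α y) (Ici 0) := by
  intro a ha b _ hab
  have hexp : τ * exp (-τ * (b + y)) ≤ τ * exp (-τ * (a + y)) :=
    mul_le_mul_of_nonneg_left (exp_le_exp.2 (by nlinarith)) hτ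
  have hpow : a ^ α < b ^ α := rpow_lt_rpow ha hab hα
  rw [marginalUtility, marginalUtility]
  linarith

theorem strictConcaveOn_utility (hτ : 0 ≤ τ) (hα : 0 < α) :
    StrictConcaveOn ℝ (Ici 0) (utility τ α y) := by
  have hderiv (t : ℝ) := hasDerivAt_utility (τ := τ) (y := y) hα.le t
  refine StrictAntiOn.strictConcaveOn_of_deriv (convex_Ici 0)
    (continuous_iff_continuousAt.2 fun t => (hderiv t).continuousAt).continuousOn ?_
  rw [interior_Ici]
  exact ((strictAntiOn_marginalUtility hτ hα).mono Ioi_subset_Ici_self).congr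
    fun t _ => (hderiv t).deriv.symm

theorem marginalUtility_eq_zero_of_mul_exp_eq (hτ : 0 < τ) (hα : 0 < α) {w : ℝ}
    (hw : w * exp w = τ ^ ((α + 1) / α) / α * exp (-τ * y / α)) :
    marginalUtility τ α y (α / τ * w) = 0 := by
  have hw0 : 0 < w := pos_of_mul_pos_left (hw ▸ by positivity) (exp_pos w).le
  have hlog : (log w + w) * α = (α + 1) * log τ - α * log α - τ * y := by
    have := congrArg log hw
    rw [log_mul hw0.ne' (exp_pos w).ne', log_exp, log_mul (by positivity) (exp_pos _).ne',
      log_div (by positivity) hα.ne', log_rpow hτ, log_exp] at this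
    field_simp at this
    linear_combination this
  have hτα : τ * (α / τ * w + y) = α * w + τ * y := by field_simp
  rw [marginalUtility, sub_eq_zero]
  refine log_injOn_pos (mem_Ioi.2 (by positivity)) (mem_Ioi.2 (by positivity)) ?_
  rw [log_mul hτ.ne' (exp_pos _).ne', log_exp, log_rpow (by positivity),
    log_mul (by positivity) hw0.ne', log_div hα.ne' hτ.ne', neg_mul, hτα]
  linear_combination -hlog

end Utility

theorem best_response_unique_maximizer_general (τ α y : ℝ) (hτ : 0 < τ) (hα : 0 < α) :
    let U : ℝ → ℝ := fun t => 1 - Real.exp (-τ * (t + y)) - t ^ (α + 1) / (α + 1)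
    let yi : ℝ := (α / τ) * lambertW ((τ ^ ((α + 1) / α) / α) * Real.exp (-τ * y / α))
    yi ∈ Set.Ici (0 : ℝ) ∧ IsMaxOn U (Set.Ici 0) yi ∧
      ∀ z ∈ Set.Ici (0 : ℝ), IsMaxOn U (Set.Ici 0) z → z = yi := by
  intro U yi
  have hc : 0 ≤ τ ^ ((α + 1) / α) / α * exp (-τ * y / α) := by positivity
  have hyi : 0 ≤ yi := mul_nonneg (by positivity) (lambertW_nonneg hc)
  have hconc : StrictConcaveOn ℝ (Ici 0) U := strictConcaveOn_utility hτ.le hα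
  have hcrit : HasDerivAt U 0 yi :=
    marginalUtility_eq_zero_of_mul_exp_eq hτ hα (lambertW_mul_exp_lambertW hc) ▸
      hasDerivAt_utility hα.le yi
  have hmax : IsMaxOn U (Ici 0) yi := hconc.concaveOn.isMaxOn_of_hasDerivAt_eq_zero hyi hcrit
  exact ⟨hyi, hmax, fun z hz hz_max => hconc.eq_of_isMaxOn hz_max hmax hz hyi⟩

/-- For τ > 0, α > 0, y ≥ 0, the unique maximizer over `y_i ≥ 0` of
`U(y_i) = 1 - exp(-τ(y_i+y)) - y_i^(α+1)/(α+1)` is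
`(α/τ) * W((τ^((α+1)/α)/α) * exp(-τ y/α))`. -/
theorem best_response_unique_maximizer (τ α y : ℝ) (hτ : 0 < τ) (hα : 0 < α) (hy : 0 ≤ y) :
    let U : ℝ → ℝ := fun t => 1 - Real.exp (-τ * (t + y)) - t ^ (α + 1) / (α + 1)
    let yi : ℝ := (α / τ) * lambertW ((τ ^ ((α + 1) / α) / α) * Real.exp (-τ * y / α))
    yi ∈ Set.Ici (0 : ℝ) ∧ IsMaxOn U (Set.Ici 0) yi ∧
      ∀ z ∈ Set.Ici (0 : ℝ), IsMaxOn U (Set.Ici 0) z → z = yi :=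
  best_response_unique_maximizer_general τ α y hτ hα
end

section
/- Let φ(τ) = (α/τ)·W((τ^{(α+1)/α})/α) for τ > 0 (the best response of an isolated player as a function of shelf life τ), where α > 0. Then φ attains its maximum over τ ∈ (0,∞) at τ* = e^{1/(α+1)}, and at this point W((τ*)^{(α+1)/α}/α) = 1/α. -/
private lemma lw_exists {x : ℝ} (hx : 0 ≤ x) :
    ∃ a ∈ Set.Ici (0:ℝ), (fun t => t * Real.exp t) a = x := by
  have hc : ContinuousOn (fun t : ℝ => t * Real.exp t) (Set.Icc 0 x) := by
    fun_prop
  have hmem : x ∈ Set.Icc ((0:ℝ) * Real.exp 0) (x * Real.exp x) := by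
    constructor
    · simpa using hx
    · nlinarith [Real.one_le_exp hx]
  obtain ⟨t, ht, hft⟩ := intermediate_value_Icc hx hc hmem
  exact ⟨t, ht.1, hft⟩

private lemma lw_nonneg {x : ℝ} (hx : 0 ≤ x) : 0 ≤ lambertW x :=
  Function.invFunOn_mem (lw_exists hx)

private lemma lw_eq {x : ℝ} (hx : 0 ≤ x) : lambertW x * Real.exp (lambertW x) = x :=
  Function.invFunOn_eq (lw_exists hx)

private lemma lw_left {w : ℝ} (hw : 0 ≤ w) : lambertW (w * Real.exp w) = w := by
  have hinj : Set.InjOn (fun t : ℝ => t * Real.exp t) (Set.Ici 0) := by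
    have hs : StrictMonoOn (fun t : ℝ => t * Real.exp t) (Set.Ici 0) := by
      intro a ha b hb hab
      have h1 : a * Real.exp a ≤ b * Real.exp a :=
        mul_le_mul_of_nonneg_right hab.le (Real.exp_pos a).le
      have h2 : b * Real.exp a < b * Real.exp b := by
        have hb0 : 0 < b := lt_of_le_of_lt ha hab
        exact mul_lt_mul_of_pos_left (Real.exp_lt_exp.2 hab) hb0
      exact lt_of_le_of_lt h1 h2
    exact hs.injOn
  exact hinj.leftInvOn_invFunOn hw

/-- For an isolated player, `φ(τ) = (α/τ) W(τ^((α+1)/α)/α)` attains its maximum over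
`τ ∈ (0,∞)` at `τ* = e^(1/(α+1))`, at which `W((τ*)^((α+1)/α)/α) = 1/α`. -/
theorem isolated_effort_maximized (α : ℝ) (hα : 0 < α) :
    let f : ℝ → ℝ := fun τ => (α / τ) * lambertW (τ ^ ((α + 1) / α) / α)
    let τs : ℝ := Real.exp (1 / (α + 1))
    IsMaxOn f (Set.Ioi 0) τs ∧ lambertW (τs ^ ((α + 1) / α) / α) = 1 / α := by
  intro f τs
  have hα1 : (0:ℝ) < α + 1 := by linarith
  have hβ : (α + 1) / α ≠ 0 := by positivity
  have hτs : τs ^ ((α + 1) / α) = Real.exp (1 / α) := by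
    rw [show τs = Real.exp (1 / (α + 1)) from rfl,
      Real.rpow_def_of_pos (Real.exp_pos _), Real.log_exp]
    congr 1
    field_simp
  have hval : lambertW (τs ^ ((α + 1) / α) / α) = 1 / α := by
    rw [hτs]
    have : Real.exp (1 / α) / α = (1 / α) * Real.exp (1 / α) := by ring
    rw [this, lw_left (by positivity)]
  refine ⟨?_, hval⟩
  have hfτs : f τs = Real.exp (-(1 / (α + 1))) := by
    show (α / τs) * lambertW (τs ^ ((α + 1) / α) / α) = _
    rw [hval, Real.exp_neg]
    field_simp [Real.exp_ne_zero, show τs = Real.exp (1/(α+1)) from rfl]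
    ring
  intro τ hτ
  have hτ0 : (0:ℝ) < τ := hτ
  set β := (α + 1) / α with hβdef
  have hτβ : (0:ℝ) < τ ^ β := Real.rpow_pos_of_pos hτ0 β
  set x := τ ^ β / α with hxdef
  have hx0 : 0 < x := by positivity
  set w := lambertW x with hwdef
  have hw0 : 0 ≤ w := lw_nonneg hx0.le
  have hwe : w * Real.exp w = x := lw_eq hx0.le
  have hwpos : 0 < w := by
    rcases hw0.lt_or_eq with h | h
    · exact h
    · exfalso
      have hx : x = 0 := by rw [← hwe, ← h]; simp
      rw [hx] at hx0; exact lt_irrefl _ hx0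
  -- key inequality
  have hEq : β * Real.log τ = Real.log α + Real.log w + w := by
    have h1 : τ ^ β = α * (w * Real.exp w) := by
      rw [hwe, hxdef]; field_simp
    have := congrArg Real.log h1
    rw [Real.log_rpow hτ0] at this
    rw [this, Real.log_mul (ne_of_gt hα) (by positivity), Real.log_mul (ne_of_gt hwpos)
      (Real.exp_ne_zero w), Real.log_exp]
    ring
  have hlogτ : Real.log τ = α * (Real.log α + Real.log w + w) / (α + 1) := by
    rw [← hEq, hβdef]; field_simp
  have hkey : Real.log α + Real.log w ≤ α * w - 1 := by
    have h1 : Real.log (α * w) ≤ α * w - 1 := Real.log_le_sub_one_of_pos (by positivity)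
    rwa [Real.log_mul (ne_of_gt hα) (ne_of_gt hwpos)] at h1
  have hgoal : Real.log ((α / τ) * w) ≤ -(1 / (α + 1)) := by
    rw [Real.log_mul (by positivity) (ne_of_gt hwpos), Real.log_div (ne_of_gt hα)
      (ne_of_gt hτ0), hlogτ]
    rw [← sub_nonpos]
    have heq : Real.log α - α * (Real.log α + Real.log w + w) / (α + 1) + Real.log w -
        (-(1 / (α + 1))) = (Real.log α + Real.log w + 1 - α * w) / (α + 1) := by
      field_simp
      ring
    rw [heq]
    apply div_nonpos_of_nonpos_of_nonneg (by linarith) (by linarith)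
  have : (α / τ) * w ≤ Real.exp (-(1 / (α + 1))) := by
    rw [← Real.exp_log (show (0:ℝ) < (α / τ) * w by positivity)]
    exact Real.exp_le_exp.2 hgoal
  calc f τ = (α / τ) * w := rfl
    _ ≤ Real.exp (-(1 / (α + 1))) := this
    _ = f τs := hfτs.symm
end
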